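/- Let m, k ≥ 1, n = m + k, and let the constraints be linear: α_ν = Σ_{j=1}^m a_{ν,j}(q₁,…,qₙ, t) q̇_j with C² coefficients a_{ν,j}, ν = 1,…,k. Let T be a C² kinetic energy, T* its restriction obtained by substituting q̇_{m+ν} = α_ν, U a C² potential of (q₁,…,qₙ,t), L* := T* + U, and define B_i^ν as in the Voronec-type formalism. Then along every C² admissible curve q(t) (q̇_{m+ν} = α_ν along the curve) satisfying the equations of motion d/dt(∂T*/∂q̇_i) − ∂T*/∂q_i − Σ_{ν=1}^k (∂T*/∂q_{m+ν}) a_{ν,i} − Σ_{ν=1}^k B_i^ν ∂T/∂q̇_{m+ν} = ∂U/∂q_i + Σ_{ν=1}^k a_{ν,i} ∂U/∂q_{m+ν} for i = 1,…,m, one has: d/dt( Σ_{i=1}^m q̇_i ∂L*/∂q̇_i − L* ) = − ∂L*/∂t + Σ_{ν=1}^k Σ_{i=1}^m q̇_i (∂T/∂q̇_{m+ν}) (∂a_{ν,i}/∂t). -/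

import Mathlib

open scoped BigOperators

noncomputable section

/-- A phase point: positions `q ∈ ℝⁿ`, independent velocities `v ∈ ℝᵐ`, and time `t`. -/
abbrev PhasePt (n m : ℕ) : Type := (Fin n → ℝ) × (Fin m → ℝ) × ℝ

/-- Partial derivative of `f : PhasePt n m → ℝ` with respect to the coordinate `q i`. -/
def pq {n m : ℕ} (f : PhasePt n m → ℝ) (i : Fin n) (p : PhasePt n m) : ℝ :=
  fderiv ℝ f p (Pi.single i 1, 0, 0)

/-- Partial derivative with respect to the independent velocity `q̇ r`. -/
def pv {n m : ℕ} (f : PhasePt n m → ℝ) (r : Fin m) (p : PhasePt n m) : ℝ :=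
  fderiv ℝ f p (0, Pi.single r 1, 0)

/-- Partial derivative with respect to time. -/
def ptime {n m : ℕ} (f : PhasePt n m → ℝ) (p : PhasePt n m) : ℝ :=
  fderiv ℝ f p (0, 0, 1)

variable {m k : ℕ}

/-- The independent velocities `q̇ 1, …, q̇ m` along a curve. -/
def ivel (q : ℝ → Fin (m + k) → ℝ) (t : ℝ) : Fin m → ℝ :=
  fun i => deriv q t (Fin.castAdd k i)

/-- The second derivatives `q̈ r` of the independent coordinates along a curve. -/
def iacc (q : ℝ → Fin (m + k) → ℝ) (t : ℝ) : Fin m → ℝ :=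
  fun i => deriv (deriv q) t (Fin.castAdd k i)

/-- The phase-space lift `(q(t), q̇ ₁(t),…,q̇ _m(t), t)` of a curve. -/
def plift (q : ℝ → Fin (m + k) → ℝ) (t : ℝ) : PhasePt (m + k) m :=
  (q t, ivel q t, t)

/-- A curve is admissible when the constraints `q̇ (m+ν) = α ν` hold along it. -/
def Admissible (α : Fin k → PhasePt (m + k) m → ℝ) (q : ℝ → Fin (m + k) → ℝ) : Prop :=
  ∀ (t : ℝ) (ν : Fin k), deriv q t (Fin.natAdd m ν) = α ν (plift q t)

/-- `ᾱ ν := ∑ i q̇ i ∂α ν/∂q̇ i`. -/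
def abar (α : Fin k → PhasePt (m + k) m → ℝ) (ν : Fin k) (p : PhasePt (m + k) m) : ℝ :=
  ∑ i : Fin m, p.2.1 i * pv (α ν) i p

/-- The Voronec coefficient `B i ν` (formula (11) of the paper), along a curve. -/
def Bcoef (α : Fin k → PhasePt (m + k) m → ℝ) (q : ℝ → Fin (m + k) → ℝ)
    (t : ℝ) (ν : Fin k) (i : Fin m) : ℝ :=
  (∑ r : Fin m, (pq (pv (α ν) i) (Fin.castAdd k r) (plift q t) * ivel q t r
      + pv (pv (α ν) i) r (plift q t) * iacc q t r))
  - pq (α ν) (Fin.castAdd k i) (plift q t)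
  + (∑ μ : Fin k, (pq (pv (α ν) i) (Fin.natAdd m μ) (plift q t) * α μ (plift q t)
      - pv (α μ) i (plift q t) * pq (α ν) (Fin.natAdd m μ) (plift q t)))
  + ptime (pv (α ν) i) (plift q t)

/-- The coefficient `B̄ ν` (formula (15) of the paper), along a curve. -/
def Bbar (α : Fin k → PhasePt (m + k) m → ℝ) (q : ℝ → Fin (m + k) → ℝ)
    (t : ℝ) (ν : Fin k) : ℝ :=
  (∑ r : Fin m, ivel q t r *
      (pq (abar α ν) (Fin.castAdd k r) (plift q t) - pq (α ν) (Fin.castAdd k r) (plift q t)))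
  + (∑ μ : Fin k, (α μ (plift q t) * pq (abar α ν) (Fin.natAdd m μ) (plift q t)
      - abar α μ (plift q t) * pq (α ν) (Fin.natAdd m μ) (plift q t)))
  + (∑ r : Fin m, iacc q t r * (pv (abar α ν) r (plift q t) - pv (α ν) r (plift q t)))
  + ptime (abar α ν) (plift q t)

/-- The full velocity vector `(q̇ ₁,…,q̇ _m, α₁,…,α_k)` obtained from a phase point. -/
def extVel (α : Fin k → PhasePt (m + k) m → ℝ) (p : PhasePt (m + k) m) : Fin (m + k) → ℝ :=
  Fin.append p.2.1 (fun ν => α ν p)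

/-- Restriction `T*` of a kinetic energy `T` by substituting `q̇ (m+ν) = α ν`. -/
def subst (α : Fin k → PhasePt (m + k) m → ℝ) (T : PhasePt (m + k) (m + k) → ℝ)
    (p : PhasePt (m + k) m) : ℝ :=
  T (p.1, extVel α p, p.2.2)

/-- `∂T/∂q̇ (m+ν)` with the dependent velocities replaced by `α₁, …, α_k`. -/
def pvT (α : Fin k → PhasePt (m + k) m → ℝ) (T : PhasePt (m + k) (m + k) → ℝ)
    (ν : Fin k) (p : PhasePt (m + k) m) : ℝ :=
  pv T (Fin.natAdd m ν) (p.1, extVel α p, p.2.2)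

/-- Partial derivative of a potential `U(q, t)` with respect to `q j`. -/
def pqU {n : ℕ} (U : (Fin n → ℝ) × ℝ → ℝ) (j : Fin n) (p : (Fin n → ℝ) × ℝ) : ℝ :=
  fderiv ℝ U p (Pi.single j 1, 0)

/-- Partial derivative of a potential `U(q, t)` with respect to time. -/
def ptU {n : ℕ} (U : (Fin n → ℝ) × ℝ → ℝ) (p : (Fin n → ℝ) × ℝ) : ℝ :=
  fderiv ℝ U p (0, 1)

/-- The Lagrangian `L* = T* + U` in terms of the independent velocities. -/
def Lag (α : Fin k → PhasePt (m + k) m → ℝ) (T : PhasePt (m + k) (m + k) → ℝ)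
    (U : (Fin (m + k) → ℝ) × ℝ → ℝ) (p : PhasePt (m + k) m) : ℝ :=
  subst α T p + U (p.1, p.2.2)

/-- The energy `∑ i q̇ i ∂L*/∂q̇ i − L*` of a function `L*` along a curve. -/
def energy (L : PhasePt (m + k) m → ℝ) (q : ℝ → Fin (m + k) → ℝ) (t : ℝ) : ℝ :=
  (∑ i : Fin m, ivel q t i * pv L i (plift q t)) - L (plift q t)

/-!
Differentiating `E = ∑ᵢ q̇ᵢ ∂L*/∂q̇ᵢ − L*` along the curve, the terms in `q̈` cancel and
`dE/dt = ∑ᵢ q̇ᵢ d/dt(∂L*/∂q̇ᵢ) − ∑ⱼ q̇ⱼ ∂L*/∂qⱼ − ∂L*/∂t`. Inserting the equations of motion and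
`q̇_{m+ν} = ∑ᵢ a_{ν,i} q̇ᵢ`, everything cancels except `−∂L*/∂t + ∑_ν (∑ᵢ q̇ᵢ B_i^ν) ∂T/∂q̇_{m+ν}`.
For linear constraints `B_i^ν = ∑_r β^ν_{ir} q̇_r + ∂a_{ν,i}/∂t` with `β^ν` antisymmetric in
`(i, r)`, so the quadratic form `∑_{i,r} q̇ᵢ β^ν_{ir} q̇_r` vanishes and only `∑ᵢ q̇ᵢ ∂a_{ν,i}/∂t`
survives.
-/

theorem sum_mul_sum_mul_comm {ι κ R : Type*} [Fintype ι] [Fintype κ] [CommSemiring R]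
    (v : ι → R) (c : κ → ι → R) (x : κ → R) :
    ∑ i, v i * ∑ ν, c ν i * x ν = ∑ ν, (∑ i, v i * c ν i) * x ν := by
  simp only [Finset.mul_sum, Finset.sum_mul, mul_assoc]
  exact Finset.sum_comm

theorem sum_mul_sum_mul_eq_zero_of_antisymm {ι R : Type*} [Fintype ι] [CommRing R]
    [IsAddTorsionFree R] {β : ι → ι → R} (hβ : ∀ i r, β r i = -β i r) (v : ι → R) :
    ∑ i, v i * ∑ r, β i r * v r = 0 := by
  refine self_eq_neg.mp ?_
  calc ∑ i, v i * ∑ r, β i r * v r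
      = ∑ r, ∑ i, v i * (β i r * v r) := by simp only [Finset.mul_sum]; exact Finset.sum_comm
    _ = -∑ r, v r * ∑ i, β r i * v i := by
        simp only [Finset.mul_sum, ← Finset.sum_neg_distrib]
        refine Finset.sum_congr rfl fun r _ => Finset.sum_congr rfl fun i _ => ?_
        rw [hβ i r]
        ring

section Partials

variable {n : ℕ}

theorem fderiv_apply_eq_sum_partials (f : PhasePt n m → ℝ) (p : PhasePt n m)
    (u : Fin n → ℝ) (w : Fin m → ℝ) (c : ℝ) :
    fderiv ℝ f p (u, w, c) =
      ∑ j, u j * pq f j p + ∑ i, w i * pv f i p + c * ptime f p := by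
  have hdecomp : ((u, w, c) : PhasePt n m) =
      ∑ j, u j • ((Pi.single j 1, 0, 0) : PhasePt n m)
        + ∑ i, w i • ((0, Pi.single i 1, 0) : PhasePt n m) + c • ((0, 0, 1) : PhasePt n m) := by
    refine Prod.ext ?_ (Prod.ext ?_ ?_) <;>
      simp [Prod.fst_sum, Prod.snd_sum, ← Pi.single_smul, Finset.univ_sum_single]
  rw [hdecomp]
  simp only [map_add, map_sum, map_smul, smul_eq_mul, pq, pv, ptime]

theorem contDiff_pv {f : PhasePt n m → ℝ} {N : WithTop ℕ∞} (hf : ContDiff ℝ (N + 1) f)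
    (r : Fin m) : ContDiff ℝ N (pv f r) :=
  (hf.fderiv_right le_rfl).clm_apply contDiff_const

def projQT (n m : ℕ) : PhasePt n m →L[ℝ] (Fin n → ℝ) × ℝ :=
  (ContinuousLinearMap.fst ℝ _ _).prod
    ((ContinuousLinearMap.snd ℝ _ ℝ).comp (ContinuousLinearMap.snd ℝ _ _))

def velCoord (n : ℕ) (j : Fin m) : PhasePt n m →L[ℝ] ℝ :=
  (ContinuousLinearMap.proj j).comp
    ((ContinuousLinearMap.fst ℝ _ ℝ).comp (ContinuousLinearMap.snd ℝ _ _))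

section PositionTime

variable {h : (Fin n → ℝ) × ℝ → ℝ} {p : PhasePt n m}

theorem differentiableAt_comp_projQT (hh : DifferentiableAt ℝ h (p.1, p.2.2)) :
    DifferentiableAt ℝ (fun p : PhasePt n m => h (p.1, p.2.2)) p :=
  hh.comp p (projQT n m).differentiableAt

theorem fderiv_comp_projQT (hh : DifferentiableAt ℝ h (p.1, p.2.2)) (d : PhasePt n m) :
    fderiv ℝ (fun p : PhasePt n m => h (p.1, p.2.2)) p d =
      fderiv ℝ h (p.1, p.2.2) (d.1, d.2.2) := by
  change fderiv ℝ (h ∘ projQT n m) p d = _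
  rw [fderiv_comp p hh (projQT n m).differentiableAt, (projQT n m).fderiv]
  rfl

theorem pq_comp_projQT (hh : DifferentiableAt ℝ h (p.1, p.2.2)) (j : Fin n) :
    pq (fun p : PhasePt n m => h (p.1, p.2.2)) j p = pqU h j (p.1, p.2.2) :=
  fderiv_comp_projQT hh _

theorem pv_comp_projQT (hh : DifferentiableAt ℝ h (p.1, p.2.2)) (r : Fin m) :
    pv (fun p : PhasePt n m => h (p.1, p.2.2)) r p = 0 :=
  (fderiv_comp_projQT hh _).trans (map_zero _)

theorem ptime_comp_projQT (hh : DifferentiableAt ℝ h (p.1, p.2.2)) :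
    ptime (fun p : PhasePt n m => h (p.1, p.2.2)) p = ptU h (p.1, p.2.2) :=
  fderiv_comp_projQT hh _

end PositionTime

end Partials

section Curve

variable {q : ℝ → Fin (m + k) → ℝ}

theorem hasDerivAt_ivel (hq : ContDiff ℝ 2 q) (t : ℝ) : HasDerivAt (ivel q) (iacc q t) t := by
  have hvel : HasDerivAt (deriv q) (deriv (deriv q) t) t :=
    ((hq.deriv' (n := 1)).differentiable one_ne_zero t).hasDerivAt
  exact hasDerivAt_pi.2 fun i => hasDerivAt_pi.1 hvel (Fin.castAdd k i)

theorem hasDerivAt_plift (hq : ContDiff ℝ 2 q) (t : ℝ) :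
    HasDerivAt (plift q) (deriv q t, iacc q t, 1) t :=
  ((hq.differentiable two_ne_zero t).hasDerivAt).prodMk
    ((hasDerivAt_ivel hq t).prodMk (hasDerivAt_id t))

theorem hasDerivAt_comp_plift (hq : ContDiff ℝ 2 q) (t : ℝ) {f : PhasePt (m + k) m → ℝ}
    (hf : DifferentiableAt ℝ f (plift q t)) :
    HasDerivAt (fun s => f (plift q s))
      (∑ j, deriv q t j * pq f j (plift q t) + ∑ i, iacc q t i * pv f i (plift q t)
        + ptime f (plift q t)) t := by
  have hchain := hf.hasFDerivAt.comp_hasDerivAt t (hasDerivAt_plift hq t)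
  rwa [fderiv_apply_eq_sum_partials, one_mul] at hchain

end Curve

section LinearInVelocity

variable {n : ℕ} {g : Fin m → (Fin n → ℝ) × ℝ → ℝ} {f : PhasePt n m → ℝ}

theorem contDiff_of_linear {N : WithTop ℕ∞}
    (hf : ∀ p, f p = ∑ j, g j (p.1, p.2.2) * p.2.1 j) (hg : ∀ j, ContDiff ℝ N (g j)) :
    ContDiff ℝ N f := by
  obtain rfl : f = _ := funext hf
  exact ContDiff.sum fun j _ => ((hg j).comp (projQT n m).contDiff).mul (velCoord n j).contDiff

theorem fderiv_apply_of_linear (hf : ∀ p, f p = ∑ j, g j (p.1, p.2.2) * p.2.1 j)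
    (hg : ∀ j, Differentiable ℝ (g j)) (p d : PhasePt n m) :
    fderiv ℝ f p d =
      ∑ j, (fderiv ℝ (g j) (p.1, p.2.2) (d.1, d.2.2) * p.2.1 j + g j (p.1, p.2.2) * d.2.1 j) := by
  obtain rfl : f = _ := funext hf
  have hgj : ∀ j, DifferentiableAt ℝ (fun p : PhasePt n m => g j (p.1, p.2.2)) p := fun j =>
    differentiableAt_comp_projQT (hg j).differentiableAt
  have hvj : ∀ j, DifferentiableAt ℝ (fun p : PhasePt n m => p.2.1 j) p := fun j =>
    (velCoord n j).differentiableAt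
  rw [fderiv_fun_sum fun j _ => (hgj j).fun_mul (hvj j), sum_apply]
  refine Finset.sum_congr rfl fun j _ => ?_
  have hv : fderiv ℝ (fun p : PhasePt n m => p.2.1 j) p d = d.2.1 j := by
    rw [show (fun p : PhasePt n m => p.2.1 j) = velCoord n j from rfl, (velCoord n j).fderiv]
    rfl
  rw [fderiv_fun_mul (hgj j) (hvj j), add_apply, smul_apply, smul_apply, hv,
    fderiv_comp_projQT (hg j).differentiableAt, smul_eq_mul, smul_eq_mul, add_comm, mul_comm]

theorem pv_eq_of_linear (hf : ∀ p, f p = ∑ j, g j (p.1, p.2.2) * p.2.1 j)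
    (hg : ∀ j, Differentiable ℝ (g j)) (i : Fin m) :
    pv f i = fun p => g i (p.1, p.2.2) := by
  ext p
  simp [pv, fderiv_apply_of_linear hf hg, Pi.single_apply, Prod.mk_zero_zero]

theorem pq_eq_of_linear (hf : ∀ p, f p = ∑ j, g j (p.1, p.2.2) * p.2.1 j)
    (hg : ∀ j, Differentiable ℝ (g j)) (j : Fin n) (p : PhasePt n m) :
    pq f j p = ∑ r, pqU (g r) j (p.1, p.2.2) * p.2.1 r := by
  simp [pq, fderiv_apply_of_linear hf hg, pqU]

end LinearInVelocity

section Voronec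

variable {a : Fin k → Fin m → (Fin (m + k) → ℝ) × ℝ → ℝ} {α : Fin k → PhasePt (m + k) m → ℝ}

/-- The classical Voronec coefficients `β^ν_{ir}`. -/
def voronecBeta (a : Fin k → Fin m → (Fin (m + k) → ℝ) × ℝ → ℝ) (ν : Fin k) (i r : Fin m)
    (x : (Fin (m + k) → ℝ) × ℝ) : ℝ :=
  pqU (a ν i) (Fin.castAdd k r) x - pqU (a ν r) (Fin.castAdd k i) x
    + ∑ μ, (pqU (a ν i) (Fin.natAdd m μ) x * a μ r x - pqU (a ν r) (Fin.natAdd m μ) x * a μ i x)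

theorem voronecBeta_swap (ν : Fin k) (i r : Fin m) (x : (Fin (m + k) → ℝ) × ℝ) :
    voronecBeta a ν r i x = -voronecBeta a ν i r x := by
  have hμ : ∀ μ, pqU (a ν r) (Fin.natAdd m μ) x * a μ i x - pqU (a ν i) (Fin.natAdd m μ) x * a μ r x
      = -(pqU (a ν i) (Fin.natAdd m μ) x * a μ r x - pqU (a ν r) (Fin.natAdd m μ) x * a μ i x) :=
    fun μ => by ring
  simp only [voronecBeta, hμ, Finset.sum_neg_distrib]
  ring

theorem Bcoef_eq_of_linear (hαdef : ∀ ν p, α ν p = ∑ j, a ν j (p.1, p.2.2) * p.2.1 j)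
    (ha : ∀ ν j, Differentiable ℝ (a ν j)) (q : ℝ → Fin (m + k) → ℝ) (t : ℝ) (ν : Fin k)
    (i : Fin m) :
    Bcoef α q t ν i = ∑ r, voronecBeta a ν i r (q t, t) * ivel q t r + ptU (a ν i) (q t, t) := by
  have hpv : ∀ μ, pv (α μ) i = fun p => a μ i (p.1, p.2.2) := fun μ =>
    pv_eq_of_linear (hαdef μ) (ha μ) i
  simp only [Bcoef, hpv, pq_comp_projQT (ha _ _).differentiableAt,
    pv_comp_projQT (ha _ _).differentiableAt, ptime_comp_projQT (ha _ _).differentiableAt,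
    pq_eq_of_linear (hαdef ν) (ha ν), hαdef, plift, zero_mul, add_zero]
  simp only [voronecBeta, add_mul, sub_mul, Finset.sum_add_distrib, Finset.sum_sub_distrib,
    Finset.sum_mul, Finset.mul_sum]
  rw [Finset.sum_comm (s := Finset.univ (α := Fin k)),
    Finset.sum_comm (s := Finset.univ (α := Fin k))]
  simp only [mul_assoc, mul_left_comm (a _ i _)]

theorem sum_ivel_mul_Bcoef_eq_of_linear (hαdef : ∀ ν p, α ν p = ∑ j, a ν j (p.1, p.2.2) * p.2.1 j)
    (ha : ∀ ν j, Differentiable ℝ (a ν j)) (q : ℝ → Fin (m + k) → ℝ) (t : ℝ) (ν : Fin k) :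
    ∑ i, ivel q t i * Bcoef α q t ν i = ∑ i, ivel q t i * ptU (a ν i) (q t, t) := by
  simp only [Bcoef_eq_of_linear hαdef ha, mul_add, Finset.sum_add_distrib,
    sum_mul_sum_mul_eq_zero_of_antisymm (voronecBeta_swap ν · · (q t, t)), zero_add]

end Voronec

section Lagrangian

variable {α : Fin k → PhasePt (m + k) m → ℝ} {T : PhasePt (m + k) (m + k) → ℝ}
  {U : (Fin (m + k) → ℝ) × ℝ → ℝ}

theorem contDiff_subst {N : WithTop ℕ∞} (hT : ContDiff ℝ N T) (hα : ∀ ν, ContDiff ℝ N (α ν)) :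
    ContDiff ℝ N (subst α T) := by
  have hext : ContDiff ℝ N (extVel α) := by
    refine contDiff_pi.2 (Fin.addCases (fun i => ?_) fun ν => ?_)
    · simp only [extVel, Fin.append_left]
      exact (velCoord (m + k) i).contDiff
    · simpa only [extVel, Fin.append_right] using hα ν
  exact hT.comp (contDiff_fst.prodMk (hext.prodMk contDiff_snd.snd))

theorem contDiff_Lag {N : WithTop ℕ∞} (hT : ContDiff ℝ N T) (hU : ContDiff ℝ N U)
    (hα : ∀ ν, ContDiff ℝ N (α ν)) : ContDiff ℝ N (Lag α T U) :=
  (contDiff_subst hT hα).add (hU.comp (projQT (m + k) m).contDiff)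

theorem fderiv_Lag {p : PhasePt (m + k) m} (hS : DifferentiableAt ℝ (subst α T) p)
    (hU : DifferentiableAt ℝ U (p.1, p.2.2)) (d : PhasePt (m + k) m) :
    fderiv ℝ (Lag α T U) p d =
      fderiv ℝ (subst α T) p d + fderiv ℝ (fun p : PhasePt (m + k) m => U (p.1, p.2.2)) p d := by
  change fderiv ℝ (fun p => subst α T p + U (p.1, p.2.2)) p d = _
  rw [fderiv_fun_add hS (differentiableAt_comp_projQT hU)]
  rfl

theorem pv_Lag (hS : Differentiable ℝ (subst α T)) (hU : Differentiable ℝ U) (i : Fin m) :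
    pv (Lag α T U) i = pv (subst α T) i := by
  ext p
  rw [pv, fderiv_Lag (hS p) (hU _), ← pv, ← pv, pv_comp_projQT (hU _), add_zero]

theorem pq_Lag {p : PhasePt (m + k) m} (hS : DifferentiableAt ℝ (subst α T) p)
    (hU : DifferentiableAt ℝ U (p.1, p.2.2)) (j : Fin (m + k)) :
    pq (Lag α T U) j p = pq (subst α T) j p + pqU U j (p.1, p.2.2) := by
  rw [pq, fderiv_Lag hS hU, ← pq, ← pq, pq_comp_projQT hU]

end Lagrangian

theorem hasDerivAt_energy {L : PhasePt (m + k) m → ℝ} (hL : ContDiff ℝ 2 L)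
    {q : ℝ → Fin (m + k) → ℝ} (hq : ContDiff ℝ 2 q) (t : ℝ) :
    HasDerivAt (energy L q)
      (∑ i, ivel q t i * deriv (fun s => pv L i (plift q s)) t
        - ∑ j, deriv q t j * pq L j (plift q t) - ptime L (plift q t)) t := by
  have hpv : ∀ i, HasDerivAt (fun s => pv L i (plift q s))
      (deriv (fun s => pv L i (plift q s)) t) t := fun i =>
    (((contDiff_pv (N := 1) hL i).differentiable one_ne_zero _).comp t
      (hasDerivAt_plift hq t).differentiableAt).hasDerivAt
  have hsum := HasDerivAt.fun_sum (u := Finset.univ) fun i _ =>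
    (hasDerivAt_pi.1 (hasDerivAt_ivel hq t) i).fun_mul (hpv i)
  refine (hsum.fun_sub (hasDerivAt_comp_plift hq t (hL.differentiable two_ne_zero _))).congr_deriv
    ?_
  rw [Finset.sum_add_distrib]
  ring

theorem sum_ivel_mul_deriv_pv_Lag
    {a : Fin k → Fin m → (Fin (m + k) → ℝ) × ℝ → ℝ} {α : Fin k → PhasePt (m + k) m → ℝ}
    {T : PhasePt (m + k) (m + k) → ℝ} {U : (Fin (m + k) → ℝ) × ℝ → ℝ} {q : ℝ → Fin (m + k) → ℝ}
    (hαdef : ∀ ν p, α ν p = ∑ j, a ν j (p.1, p.2.2) * p.2.1 j)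
    (ha : ∀ ν j, Differentiable ℝ (a ν j)) (hS : Differentiable ℝ (subst α T))
    (hU : Differentiable ℝ U) (hadm : Admissible α q) (t : ℝ)
    (heom : ∀ i : Fin m,
      deriv (fun s => pv (subst α T) i (plift q s)) t
        - pq (subst α T) (Fin.castAdd k i) (plift q t)
        - (∑ ν : Fin k, pq (subst α T) (Fin.natAdd m ν) (plift q t) * a ν i (q t, t))
        - (∑ ν : Fin k, Bcoef α q t ν i * pvT α T ν (plift q t)) =
      pqU U (Fin.castAdd k i) (q t, t)
        + ∑ ν : Fin k, a ν i (q t, t) * pqU U (Fin.natAdd m ν) (q t, t)) :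
    ∑ i, ivel q t i * deriv (fun s => pv (Lag α T U) i (plift q s)) t =
      ∑ j, deriv q t j * pq (Lag α T U) j (plift q t)
        + ∑ ν, ∑ i, ivel q t i * pvT α T ν (plift q t) * ptU (a ν i) (q t, t) := by
  have hlagrange : ∀ i, deriv (fun s => pv (Lag α T U) i (plift q s)) t =
      pq (Lag α T U) (Fin.castAdd k i) (plift q t)
        + ∑ ν, a ν i (q t, t) * pq (Lag α T U) (Fin.natAdd m ν) (plift q t)
        + ∑ ν, Bcoef α q t ν i * pvT α T ν (plift q t) := by
    intro i
    have hpq : ∀ j, pq (Lag α T U) j (plift q t) =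
        pq (subst α T) j (plift q t) + pqU U j (q t, t) := fun j => pq_Lag (hS _) (hU _) j
    have heom_i := heom i
    simp only [mul_comm (a _ i _)] at heom_i ⊢
    simp only [pv_Lag hS hU, hpq, add_mul, Finset.sum_add_distrib]
    linarith
  have hdependent : ∀ ν, ∑ i, ivel q t i * a ν i (q t, t) = deriv q t (Fin.natAdd m ν) := by
    intro ν
    rw [hadm t ν, hαdef]
    exact Finset.sum_congr rfl fun _ _ => mul_comm _ _
  calc ∑ i, ivel q t i * deriv (fun s => pv (Lag α T U) i (plift q s)) t
      = ∑ i, ivel q t i * pq (Lag α T U) (Fin.castAdd k i) (plift q t)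
        + ∑ ν, (∑ i, ivel q t i * a ν i (q t, t)) * pq (Lag α T U) (Fin.natAdd m ν) (plift q t)
        + ∑ ν, (∑ i, ivel q t i * Bcoef α q t ν i) * pvT α T ν (plift q t) := by
        simp only [hlagrange, mul_add, Finset.sum_add_distrib, sum_mul_sum_mul_comm]
    _ = ∑ j, deriv q t j * pq (Lag α T U) j (plift q t)
        + ∑ ν, ∑ i, ivel q t i * pvT α T ν (plift q t) * ptU (a ν i) (q t, t) := by
        rw [Fin.sum_univ_add]
        simp only [hdependent, sum_ivel_mul_Bcoef_eq_of_linear hαdef ha, Finset.sum_mul,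
          mul_right_comm _ (ptU _ _)]
        rfl

theorem energy_balance_linear_constraints_general
    (m k : ℕ)
    (a : Fin k → Fin m → (Fin (m + k) → ℝ) × ℝ → ℝ) (ha : ∀ ν j, ContDiff ℝ 2 (a ν j))
    (α : Fin k → PhasePt (m + k) m → ℝ)
    (hαdef : ∀ (ν : Fin k) (p : PhasePt (m + k) m),
      α ν p = ∑ j : Fin m, a ν j (p.1, p.2.2) * p.2.1 j)
    (T : PhasePt (m + k) (m + k) → ℝ) (hT : ContDiff ℝ 2 T)
    (U : (Fin (m + k) → ℝ) × ℝ → ℝ) (hU : ContDiff ℝ 2 U)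
    (q : ℝ → Fin (m + k) → ℝ) (hq : ContDiff ℝ 2 q)
    (hadm : Admissible α q)
    (heom : ∀ (t : ℝ) (i : Fin m),
      deriv (fun s => pv (subst α T) i (plift q s)) t
        - pq (subst α T) (Fin.castAdd k i) (plift q t)
        - (∑ ν : Fin k, pq (subst α T) (Fin.natAdd m ν) (plift q t) * a ν i (q t, t))
        - (∑ ν : Fin k, Bcoef α q t ν i * pvT α T ν (plift q t)) =
      pqU U (Fin.castAdd k i) (q t, t)
        + ∑ ν : Fin k, a ν i (q t, t) * pqU U (Fin.natAdd m ν) (q t, t)) :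
    ∀ t : ℝ,
      deriv (fun s => energy (Lag α T U) q s) t =
        - ptime (Lag α T U) (plift q t)
          + ∑ ν : Fin k, ∑ i : Fin m,
              ivel q t i * pvT α T ν (plift q t) * ptU (a ν i) (q t, t) := by
  intro t
  have hα : ∀ ν, ContDiff ℝ 2 (α ν) := fun ν => contDiff_of_linear (hαdef ν) (ha ν)
  have hS : ContDiff ℝ 2 (subst α T) := contDiff_subst hT hα
  rw [(hasDerivAt_energy (contDiff_Lag hT hU hα) hq t).deriv,
    sum_ivel_mul_deriv_pv_Lag hαdef (fun ν j => (ha ν j).differentiable two_ne_zero)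
      (hS.differentiable two_ne_zero) (hU.differentiable two_ne_zero) hadm t (heom t)]
  ring

/-- energy balance (26) for linear nonholonomic constraints.
For linear constraints `α ν = ∑ j a ν j (q, t) q̇ j`, along every admissible `C²`
solution of the Voronec equations of motion one has
`d/dt(∑ i q̇ i ∂L*/∂q̇ i − L*) = − ∂L*/∂t + ∑ ν ∑ i q̇ i (∂T/∂q̇ (m+ν)) (∂a ν i/∂t)`. -/
theorem energy_balance_linear_constraints
    (m k : ℕ) (hm : 1 ≤ m) (hk : 1 ≤ k)
    (a : Fin k → Fin m → (Fin (m + k) → ℝ) × ℝ → ℝ) (ha : ∀ ν j, ContDiff ℝ 2 (a ν j))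
    (α : Fin k → PhasePt (m + k) m → ℝ)
    (hαdef : ∀ (ν : Fin k) (p : PhasePt (m + k) m),
      α ν p = ∑ j : Fin m, a ν j (p.1, p.2.2) * p.2.1 j)
    (T : PhasePt (m + k) (m + k) → ℝ) (hT : ContDiff ℝ 2 T)
    (U : (Fin (m + k) → ℝ) × ℝ → ℝ) (hU : ContDiff ℝ 2 U)
    (q : ℝ → Fin (m + k) → ℝ) (hq : ContDiff ℝ 2 q)
    (hadm : Admissible α q)
    (heom : ∀ (t : ℝ) (i : Fin m),
      deriv (fun s => pv (subst α T) i (plift q s)) t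
        - pq (subst α T) (Fin.castAdd k i) (plift q t)
        - (∑ ν : Fin k, pq (subst α T) (Fin.natAdd m ν) (plift q t) * a ν i (q t, t))
        - (∑ ν : Fin k, Bcoef α q t ν i * pvT α T ν (plift q t)) =
      pqU U (Fin.castAdd k i) (q t, t)
        + ∑ ν : Fin k, a ν i (q t, t) * pqU U (Fin.natAdd m ν) (q t, t)) :
    ∀ t : ℝ,
      deriv (fun s => energy (Lag α T U) q s) t =
        - ptime (Lag α T U) (plift q t)
          + ∑ ν : Fin k, ∑ i : Fin m,
              ivel q t i * pvT α T ν (plift q t) * ptU (a ν i) (q t, t) :=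
  energy_balance_linear_constraints_general m k a ha α hαdef T hT U hU q hq hadm heom

end
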